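/- For every M¹ initial datum (φ,ξ) there exists exactly one continuous function y : [0,∞) → 𝕂ⁿ with y(0) = ξ such that the prolongation x of (φ,ξ) by y is a mild solution of the linear retarded functional differential equation ẋ(t) = L x_t, i.e. x(t) = ξ + L(∫_0^t x_s ds) holds for all t ≥ 0. -/

import Mathlib

open MeasureTheory

/-- `IsSolForced r L φ ξ G x` : `x : ℝ → 𝕂ⁿ` (regarded as a function on `[-r,∞)`) is a
solution of the integral equation `x(t) = ξ + L(∫_0^t x_s ds) + G(t)` for `t ≥ 0`, with
history `φ` on `[-r,0)` and value `ξ` at `0`; here `∫_0^t x_s ds` is the continuous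
function `[-r,0] → 𝕂ⁿ`, `θ ↦ ∫_θ^{t+θ} x(s) ds`.  Taking `G = 0` gives the notion of a
mild solution of `ẋ(t) = L x_t`. -/
def IsSolForced {𝕜 : Type*} [RCLike 𝕜] {n : ℕ} (r : ℝ)
    (L : C(Set.Icc (-r) (0:ℝ), Fin n → 𝕜) →L[𝕜] (Fin n → 𝕜))
    (φ : ℝ → Fin n → 𝕜) (ξ : Fin n → 𝕜) (G : ℝ → Fin n → 𝕜)
    (x : ℝ → Fin n → 𝕜) : Prop :=
  (∀ θ ∈ Set.Ico (-r) (0:ℝ), x θ = φ θ) ∧ x 0 = ξ ∧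
  ContinuousOn x (Set.Ici (0:ℝ)) ∧
  ∀ t, 0 ≤ t → ∃ ψ : C(Set.Icc (-r) (0:ℝ), Fin n → 𝕜),
    (∀ θ : Set.Icc (-r) (0:ℝ), ψ θ = ∫ s in (θ : ℝ)..(t + (θ : ℝ)), x s) ∧
    x t = ξ + L ψ + G t


set_option linter.unusedSectionVars false
set_option maxHeartbeats 1000000

namespace Stmt0Aux

open Set intervalIntegral Real

variable {E : Type*} [NormedAddCommGroup E] [NormedSpace ℝ E] [CompleteSpace E]

theorem ae_ne_zero : ∀ᵐ s : ℝ, s ≠ (0:ℝ) := by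
  have h : {s : ℝ | ¬ s ≠ (0:ℝ)} = {0} := by ext s; simp
  rw [MeasureTheory.ae_iff, h]
  exact Real.volume_singleton

/-- Key bound: if `g` vanishes on `[-r,0)` then `‖∫_θ^{t+θ} g‖ ≤ ∫_{(0,t]} ‖g‖`. -/
theorem key_bound {r t θ : ℝ} {g : ℝ → E} (hg : ∀ s ∈ Set.Ico (-r) (0:ℝ), g s = 0)
    (ht : 0 ≤ t) (hθ : -r ≤ θ) (hθ0 : θ ≤ 0)
    (hint2 : IntegrableOn g (Set.Ioc 0 t)) :
    ‖∫ s in θ..(t + θ), g s‖ ≤ ∫ s in Set.Ioc 0 t, ‖g s‖ := by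
  have hle : θ ≤ t + θ := le_add_of_nonneg_left ht
  rw [intervalIntegral.integral_of_le hle]
  refine le_trans (norm_integral_le_integral_norm _) ?_
  have hcong : ∫ s in Set.Ioc θ (t+θ), ‖g s‖
      = ∫ s in Set.Ioc θ (t+θ), (Set.Ioc (0:ℝ) t).indicator (fun s => ‖g s‖) s := by
    refine setIntegral_congr_ae measurableSet_Ioc ?_
    filter_upwards [ae_ne_zero] with s hs hmem
    by_cases h : s ∈ Set.Ioc (0:ℝ) t
    · rw [Set.indicator_of_mem h]
    · rw [Set.indicator_of_notMem h, hg s ?_, norm_zero]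
      have hs0 : s < 0 := by
        rcases lt_or_ge s 0 with h' | h'
        · exact h'
        · exact absurd ⟨lt_of_le_of_ne h' (Ne.symm hs), le_trans hmem.2 (by linarith)⟩ h
      exact ⟨by linarith [hmem.1], hs0⟩
  rw [hcong, setIntegral_indicator measurableSet_Ioc]
  refine setIntegral_mono_set hint2.norm ?_ ?_
  · filter_upwards with s using norm_nonneg _
  · exact HasSubset.Subset.eventuallyLE Set.inter_subset_right


noncomputable def xz (r k : ℝ) (φ : ℝ → E) (z : BoundedContinuousFunction ℝ E) : ℝ → E :=
  fun s => if 0 ≤ s then Real.exp (k * s) • z s else (Set.Ico (-r) (0:ℝ)).indicator φ s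

theorem continuous_cz (k : ℝ) (z : BoundedContinuousFunction ℝ E) :
    Continuous (fun s : ℝ => Real.exp (k * max s 0) • z (max s 0)) := by
  have hmax : Continuous fun s : ℝ => max s 0 := continuous_id.max continuous_const
  exact (Real.continuous_exp.comp (continuous_const.mul hmax)).smul (z.continuous.comp hmax)

theorem intervalIntegrable_xz {r : ℝ} {φ : ℝ → E} (k : ℝ) (z : BoundedContinuousFunction ℝ E)
    (hφ : IntegrableOn φ (Set.Ico (-r) (0:ℝ)) volume) (a b : ℝ) :
    IntervalIntegrable (xz r k φ z) volume a b := by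
  rw [intervalIntegrable_iff]
  have hsub : Set.uIoc a b ⊆ (Set.uIoc a b ∩ Iio 0) ∪ (Set.uIoc a b ∩ Ici 0) := by
    intro s hs
    rcases lt_or_ge s 0 with h | h
    · exact Or.inl ⟨hs, h⟩
    · exact Or.inr ⟨hs, h⟩
  refine IntegrableOn.mono_set (IntegrableOn.union ?_ ?_) hsub
  · refine IntegrableOn.congr_fun
      ((hφ.integrable_indicator measurableSet_Ico).integrableOn) ?_
      (measurableSet_uIoc.inter measurableSet_Iio)
    intro s hs
    simp only [xz, if_neg (not_le.2 (Set.mem_Iio.mp hs.2))]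
  · have hc := (continuous_cz k z).intervalIntegrable (μ := volume) a b
    rw [intervalIntegrable_iff] at hc
    refine IntegrableOn.congr_fun (hc.mono_set Set.inter_subset_left) ?_
      (measurableSet_uIoc.inter measurableSet_Ici)
    intro s hs
    have h0 : (0:ℝ) ≤ s := hs.2
    simp only [xz, if_pos h0, max_eq_left h0]

noncomputable def Fz (r k : ℝ) (φ : ℝ → E) (z : BoundedContinuousFunction ℝ E) : ℝ → E :=
  fun u => ∫ s in (0:ℝ)..u, xz r k φ z s

theorem continuous_Fz {r : ℝ} {φ : ℝ → E} (k : ℝ) (z : BoundedContinuousFunction ℝ E)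
    (hφ : IntegrableOn φ (Set.Ico (-r) (0:ℝ)) volume) : Continuous (Fz r k φ z) :=
  intervalIntegral.continuous_primitive (intervalIntegrable_xz k z hφ) 0

noncomputable def Psiz (r k : ℝ) (φ : ℝ → E) (z : BoundedContinuousFunction ℝ E)
    (hφ : IntegrableOn φ (Set.Ico (-r) (0:ℝ)) volume) : C(ℝ, C(Set.Icc (-r) (0:ℝ), E)) :=
  ContinuousMap.curry
    ⟨fun p : ℝ × Set.Icc (-r) (0:ℝ) => Fz r k φ z (p.1 + p.2) - Fz r k φ z p.2, by
      have hF := continuous_Fz k z hφ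
      exact (hF.comp (continuous_fst.add (continuous_subtype_val.comp continuous_snd))).sub
        (hF.comp (continuous_subtype_val.comp continuous_snd))⟩

theorem Psiz_apply {r : ℝ} {φ : ℝ → E} (k : ℝ) (z : BoundedContinuousFunction ℝ E)
    (hφ : IntegrableOn φ (Set.Ico (-r) (0:ℝ)) volume) (u : ℝ) (θ : Set.Icc (-r) (0:ℝ)) :
    Psiz r k φ z hφ u θ = ∫ s in (θ:ℝ)..(u + (θ:ℝ)), xz r k φ z s := by
  have h : Psiz r k φ z hφ u θ = Fz r k φ z (u + θ) - Fz r k φ z θ := rfl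
  rw [h]
  exact intervalIntegral.integral_interval_sub_left
    (intervalIntegrable_xz k z hφ 0 (u + θ)) (intervalIntegrable_xz k z hφ 0 θ)

theorem Psiz_zero {r : ℝ} {φ : ℝ → E} (k : ℝ) (z : BoundedContinuousFunction ℝ E)
    (hφ : IntegrableOn φ (Set.Ico (-r) (0:ℝ)) volume) : Psiz r k φ z hφ 0 = 0 := by
  ext θ
  have h : Psiz r k φ z hφ 0 θ = Fz r k φ z (0 + θ) - Fz r k φ z θ := rfl
  rw [h, zero_add, sub_self]
  rfl

theorem integral_exp_k {k u : ℝ} (hk : 0 < k) (hu : 0 ≤ u) :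
    ∫ s in Set.Ioc (0:ℝ) u, Real.exp (k * s) = (Real.exp (k * u) - 1) / k := by
  rw [← intervalIntegral.integral_of_le hu,
    intervalIntegral.integral_comp_mul_left (fun x => Real.exp x) (ne_of_gt hk)]
  rw [mul_zero, integral_exp, Real.exp_zero, smul_eq_mul]
  field_simp

theorem integrableOn_norm_xz {r : ℝ} {φ : ℝ → E} (k : ℝ) (z : BoundedContinuousFunction ℝ E)
    (hφ : IntegrableOn φ (Set.Ico (-r) (0:ℝ)) volume) (a b : ℝ) :
    IntegrableOn (fun s => ‖xz r k φ z s‖) (Set.Ioc a b) volume := by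
  have h := (intervalIntegrable_xz k z hφ a b).1
  exact h.norm

theorem norm_Psiz_le {r k : ℝ} {φ : ℝ → E} (z : BoundedContinuousFunction ℝ E)
    (hφ : IntegrableOn φ (Set.Ico (-r) (0:ℝ)) volume) (hr : 0 < r) (hk : 0 < k)
    {u : ℝ} (hu : 0 ≤ u) :
    ‖Psiz r k φ z hφ u‖ ≤ (∫ s in Set.Ico (-r) (0:ℝ), ‖φ s‖) + ‖z‖ * (Real.exp (k * u) / k) := by
  set A := ∫ s in Set.Ico (-r) (0:ℝ), ‖φ s‖ with hA
  have hA0 : 0 ≤ A := setIntegral_nonneg measurableSet_Ico fun s _ => norm_nonneg _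
  refine (ContinuousMap.norm_le _ (by positivity)).2 fun θ => ?_
  rw [Psiz_apply]
  have hle : (θ:ℝ) ≤ u + θ := le_add_of_nonneg_left hu
  rw [intervalIntegral.integral_of_le hle]
  have hθ1 : -r ≤ (θ:ℝ) := θ.2.1
  have hθ2 : (θ:ℝ) ≤ 0 := θ.2.2
  have step1 : ‖∫ s in Set.Ioc (θ:ℝ) (u + θ), xz r k φ z s‖
      ≤ ∫ s in Set.Ioc (-r) u, ‖xz r k φ z s‖ := by
    refine le_trans (norm_integral_le_integral_norm _) ?_
    refine setIntegral_mono_set (integrableOn_norm_xz k z hφ _ _)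
      (Filter.Eventually.of_forall fun s => norm_nonneg _) ?_
    refine HasSubset.Subset.eventuallyLE (Set.Ioc_subset_Ioc hθ1 (by linarith))
  refine step1.trans ?_
  have hsplit : Set.Ioc (-r) u = Set.Ioc (-r) 0 ∪ Set.Ioc (0:ℝ) u :=
    (Set.Ioc_union_Ioc_eq_Ioc (by linarith) hu).symm
  rw [hsplit, setIntegral_union (Set.Ioc_disjoint_Ioc_of_le le_rfl) measurableSet_Ioc
    (integrableOn_norm_xz k z hφ _ _) (integrableOn_norm_xz k z hφ _ _)]
  have piece1 : ∫ s in Set.Ioc (-r) (0:ℝ), ‖xz r k φ z s‖ ≤ A := by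
    have hcong : ∫ s in Set.Ioc (-r) (0:ℝ), ‖xz r k φ z s‖
        = ∫ s in Set.Ioc (-r) (0:ℝ), (Set.Ico (-r) (0:ℝ)).indicator (fun s => ‖φ s‖) s := by
      refine setIntegral_congr_ae measurableSet_Ioc ?_
      filter_upwards [ae_ne_zero] with s hs hmem
      have hs0 : s < 0 := lt_of_le_of_ne hmem.2 hs
      rw [show xz r k φ z s = (Set.Ico (-r) (0:ℝ)).indicator φ s from if_neg (not_le.2 hs0)]
      rw [← norm_indicator_eq_indicator_norm]
    rw [hcong, setIntegral_indicator measurableSet_Ico]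
    refine setIntegral_mono_set hφ.norm
      (Filter.Eventually.of_forall fun s => norm_nonneg _)
      (HasSubset.Subset.eventuallyLE Set.inter_subset_right)
  have piece2 : ∫ s in Set.Ioc (0:ℝ) u, ‖xz r k φ z s‖ ≤ ‖z‖ * (Real.exp (k * u) / k) := by
    have hmono : ∫ s in Set.Ioc (0:ℝ) u, ‖xz r k φ z s‖
        ≤ ∫ s in Set.Ioc (0:ℝ) u, Real.exp (k * s) * ‖z‖ := by
      refine setIntegral_mono_on (integrableOn_norm_xz k z hφ _ _)
        (((Real.continuous_exp.comp (continuous_const.mul continuous_id)).mul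
          continuous_const).integrableOn_Ioc) measurableSet_Ioc fun s hs => ?_
      have h0 : (0:ℝ) ≤ s := le_of_lt hs.1
      rw [show xz r k φ z s = Real.exp (k * s) • z s from if_pos h0, norm_smul,
        Real.norm_eq_abs, Real.abs_exp]
      exact mul_le_mul_of_nonneg_left (z.norm_coe_le_norm s) (Real.exp_pos _).le
    refine hmono.trans ?_
    rw [MeasureTheory.integral_mul_const, integral_exp_k hk hu, mul_comm]
    gcongr
    linarith
  linarith

section Phi

variable {r k : ℝ} {φ : ℝ → E}

noncomputable def Phi (L : C(Set.Icc (-r) (0:ℝ), E) →L[ℝ] E) (ξ : E)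
    (hr : 0 < r) (hk : 0 < k) (hφ : IntegrableOn φ (Set.Ico (-r) (0:ℝ)) volume)
    (z : BoundedContinuousFunction ℝ E) : BoundedContinuousFunction ℝ E :=
  BoundedContinuousFunction.ofNormedAddCommGroup
    (fun t => Real.exp (-(k * max t 0)) • (ξ + L (Psiz r k φ z hφ (max t 0))))
    (by
      have hmax : Continuous fun t : ℝ => max t 0 := continuous_id.max continuous_const
      exact ((Real.continuous_exp.comp (continuous_const.mul hmax).neg).smul
        (continuous_const.add (L.continuous.comp
          ((Psiz r k φ z hφ).continuous.comp hmax)))))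
    (‖ξ‖ + ‖L‖ * (∫ s in Set.Ico (-r) (0:ℝ), ‖φ s‖) + ‖L‖ * ‖z‖ / k)
    (by
      intro t
      set u := max t 0 with hu
      have hu0 : 0 ≤ u := le_max_right _ _
      set A := ∫ s in Set.Ico (-r) (0:ℝ), ‖φ s‖ with hA
      have hA0 : 0 ≤ A := setIntegral_nonneg measurableSet_Ico fun s _ => norm_nonneg _
      rw [norm_smul, Real.norm_eq_abs, Real.abs_exp]
      have h1 : ‖ξ + L (Psiz r k φ z hφ u)‖ ≤ ‖ξ‖ + ‖L‖ * (A + ‖z‖ * (Real.exp (k*u)/k)) := by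
        refine (norm_add_le _ _).trans ?_
        refine add_le_add_right ?_ _
        refine (L.le_opNorm _).trans ?_
        exact mul_le_mul_of_nonneg_left (norm_Psiz_le z hφ hr hk hu0) (norm_nonneg _)
      have hexple : Real.exp (-(k*u)) ≤ 1 := by
        rw [Real.exp_le_one_iff]
        have : 0 ≤ k * u := mul_nonneg hk.le hu0
        linarith
      have hprod : Real.exp (-(k*u)) * Real.exp (k*u) = 1 := by
        rw [← Real.exp_add]; simp
      have hexp0 : 0 ≤ Real.exp (-(k*u)) := (Real.exp_pos _).le
      calc Real.exp (-(k*u)) * ‖ξ + L (Psiz r k φ z hφ u)‖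
          ≤ Real.exp (-(k*u)) * (‖ξ‖ + ‖L‖ * (A + ‖z‖ * (Real.exp (k*u)/k))) :=
            mul_le_mul_of_nonneg_left h1 hexp0
        _ = Real.exp (-(k*u)) * (‖ξ‖ + ‖L‖ * A)
            + (‖L‖ * ‖z‖ / k) * (Real.exp (-(k*u)) * Real.exp (k*u)) := by ring
        _ ≤ 1 * (‖ξ‖ + ‖L‖ * A) + (‖L‖ * ‖z‖ / k) * 1 := by
            rw [hprod]
            refine add_le_add ?_ le_rfl
            refine mul_le_mul_of_nonneg_right hexple ?_
            positivity
        _ = ‖ξ‖ + ‖L‖ * A + ‖L‖ * ‖z‖ / k := by ring)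

theorem Phi_apply (L : C(Set.Icc (-r) (0:ℝ), E) →L[ℝ] E) (ξ : E)
    (hr : 0 < r) (hk : 0 < k) (hφ : IntegrableOn φ (Set.Ico (-r) (0:ℝ)) volume)
    (z : BoundedContinuousFunction ℝ E) (t : ℝ) :
    Phi L ξ hr hk hφ z t = Real.exp (-(k * max t 0)) • (ξ + L (Psiz r k φ z hφ (max t 0))) :=
  rfl

theorem dist_Phi_le (L : C(Set.Icc (-r) (0:ℝ), E) →L[ℝ] E) (ξ : E)
    (hr : 0 < r) (hk : 0 < k) (hφ : IntegrableOn φ (Set.Ico (-r) (0:ℝ)) volume)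
    (z z' : BoundedContinuousFunction ℝ E) :
    dist (Phi L ξ hr hk hφ z) (Phi L ξ hr hk hφ z') ≤ (‖L‖ / k) * dist z z' := by
  refine (BoundedContinuousFunction.dist_le (by positivity)).2 fun t => ?_
  set u := max t 0 with hu
  have hu0 : 0 ≤ u := le_max_right _ _
  have hprod : Real.exp (-(k*u)) * Real.exp (k*u) = 1 := by
    rw [← Real.exp_add]; simp
  rw [dist_eq_norm, Phi_apply, Phi_apply]
  have heq : Real.exp (-(k * u)) • (ξ + L (Psiz r k φ z hφ u))
      - Real.exp (-(k * u)) • (ξ + L (Psiz r k φ z' hφ u))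
      = Real.exp (-(k * u)) • (L (Psiz r k φ z hφ u - Psiz r k φ z' hφ u)) := by
    rw [← smul_sub, map_sub]
    congr 1
    abel
  rw [heq, norm_smul, Real.norm_eq_abs, Real.abs_exp]
  have hψ : ‖Psiz r k φ z hφ u - Psiz r k φ z' hφ u‖ ≤ dist z z' * (Real.exp (k*u)/k) := by
    refine (ContinuousMap.norm_le _ (by positivity)).2 fun θ => ?_
    rw [ContinuousMap.sub_apply, Psiz_apply, Psiz_apply]
    have hii : IntervalIntegrable (xz r k φ z) volume (θ:ℝ) (u + θ) :=
      intervalIntegrable_xz k z hφ _ _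
    have hii' : IntervalIntegrable (xz r k φ z') volume (θ:ℝ) (u + θ) :=
      intervalIntegrable_xz k z' hφ _ _
    rw [← intervalIntegral.integral_sub hii hii']
    have hkey : ‖∫ s in (θ:ℝ)..(u + θ), (xz r k φ z s - xz r k φ z' s)‖
        ≤ ∫ s in Set.Ioc (0:ℝ) u, ‖xz r k φ z s - xz r k φ z' s‖ := by
      refine key_bound ?_ hu0 θ.2.1 θ.2.2 ?_
      · intro s hs
        have hs0 : ¬ (0:ℝ) ≤ s := not_le.2 hs.2
        simp only [xz, if_neg hs0, sub_self]
      · exact ((intervalIntegrable_xz k z hφ 0 u).1.sub (intervalIntegrable_xz k z' hφ 0 u).1)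
    refine hkey.trans ?_
    have hmono : ∫ s in Set.Ioc (0:ℝ) u, ‖xz r k φ z s - xz r k φ z' s‖
        ≤ ∫ s in Set.Ioc (0:ℝ) u, Real.exp (k * s) * dist z z' := by
      refine setIntegral_mono_on
        (((intervalIntegrable_xz k z hφ 0 u).1.sub (intervalIntegrable_xz k z' hφ 0 u).1).norm)
        (((Real.continuous_exp.comp (continuous_const.mul continuous_id)).mul
          continuous_const).integrableOn_Ioc) measurableSet_Ioc fun s hs => ?_
      have h0 : (0:ℝ) ≤ s := le_of_lt hs.1
      have hxs : xz r k φ z s - xz r k φ z' s = Real.exp (k * s) • (z s - z' s) := by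
        simp only [xz, if_pos h0, smul_sub]
      rw [hxs, norm_smul, Real.norm_eq_abs, Real.abs_exp]
      refine mul_le_mul_of_nonneg_left ?_ (Real.exp_pos _).le
      rw [← dist_eq_norm]
      exact BoundedContinuousFunction.dist_coe_le_dist s
    refine hmono.trans ?_
    rw [MeasureTheory.integral_mul_const, integral_exp_k hk hu0, mul_comm]
    gcongr
    linarith
  calc Real.exp (-(k*u)) * ‖L (Psiz r k φ z hφ u - Psiz r k φ z' hφ u)‖
      ≤ Real.exp (-(k*u)) * (‖L‖ * (dist z z' * (Real.exp (k*u)/k))) := by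
        refine mul_le_mul_of_nonneg_left ?_ (Real.exp_pos _).le
        refine (L.le_opNorm _).trans ?_
        exact mul_le_mul_of_nonneg_left hψ (norm_nonneg _)
    _ = (‖L‖ / k) * dist z z' * (Real.exp (-(k*u)) * Real.exp (k*u)) := by ring
    _ = (‖L‖ / k) * dist z z' := by rw [hprod, mul_one]

end Phi

/-- The abstract notion of mild solution, over `ℝ`. -/
def Sol (r : ℝ) (L : C(Set.Icc (-r) (0:ℝ), E) →L[ℝ] E) (φ : ℝ → E) (ξ : E) (x : ℝ → E) : Prop :=
  (∀ θ ∈ Set.Ico (-r) (0:ℝ), x θ = φ θ) ∧ x 0 = ξ ∧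
  ContinuousOn x (Set.Ici (0:ℝ)) ∧
  ∀ t, 0 ≤ t → ∃ ψ : C(Set.Icc (-r) (0:ℝ), E),
    (∀ θ : Set.Icc (-r) (0:ℝ), ψ θ = ∫ s in (θ : ℝ)..(t + (θ : ℝ)), x s) ∧
    x t = ξ + L ψ

theorem sol_integrableOn {r : ℝ} {φ : ℝ → E} {x : ℝ → E}
    (hr : 0 < r) (h1 : ∀ θ ∈ Set.Ico (-r) (0:ℝ), x θ = φ θ)
    (hc : ContinuousOn x (Set.Ici (0:ℝ)))
    (hφ : IntegrableOn φ (Set.Ico (-r) (0:ℝ)) volume)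
    {u : ℝ} (hu : 0 ≤ u) : IntegrableOn x (Set.Ioc (-r) u) volume := by
  have hsub : Set.Ioc (-r) u ⊆ Set.Ico (-r) 0 ∪ Set.Icc 0 u := by
    intro s hs
    rcases lt_or_ge s 0 with h | h
    · exact Or.inl ⟨hs.1.le, h⟩
    · exact Or.inr ⟨h, hs.2⟩
  refine IntegrableOn.mono_set (IntegrableOn.union ?_ ?_) hsub
  · exact IntegrableOn.congr_fun hφ (fun s hs => (h1 s hs).symm) measurableSet_Ico
  · exact (hc.mono (Set.Icc_subset_Ici_self)).integrableOn_Icc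

theorem Sol.unique {r : ℝ} {L : C(Set.Icc (-r) (0:ℝ), E) →L[ℝ] E} {φ : ℝ → E} {ξ : E}
    {x x' : ℝ → E} (hr : 0 < r) (hφ : IntegrableOn φ (Set.Ico (-r) (0:ℝ)) volume)
    (hx : Sol r L φ ξ x) (hx' : Sol r L φ ξ x') {t : ℝ} (ht : 0 ≤ t) : x' t = x t := by
  set g := fun s => x' s - x s with hgdef
  have hg0 : ∀ s ∈ Set.Ico (-r) (0:ℝ), g s = 0 := fun s hs => by
    simp only [hgdef, hx'.1 s hs, hx.1 s hs, sub_self]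
  have hgcont : ContinuousOn g (Set.Ici (0:ℝ)) := hx'.2.2.1.sub hx.2.2.1
  have hgint : ∀ u : ℝ, 0 ≤ u → IntegrableOn g (Set.Ioc (0:ℝ) u) volume := fun u hu => by
    exact Integrable.sub
      ((sol_integrableOn hr hx'.1 hx'.2.2.1 hφ hu).mono_set
        (Set.Ioc_subset_Ioc (by linarith) le_rfl))
      ((sol_integrableOn hr hx.1 hx.2.2.1 hφ hu).mono_set
        (Set.Ioc_subset_Ioc (by linarith) le_rfl))
  -- the basic integral inequality
  have key : ∀ u : ℝ, 0 ≤ u → ‖g u‖ ≤ ‖L‖ * ∫ s in Set.Ioc (0:ℝ) u, ‖g s‖ := by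
    intro u hu
    obtain ⟨ψ, hψ, heq⟩ := hx.2.2.2 u hu
    obtain ⟨ψ', hψ', heq'⟩ := hx'.2.2.2 u hu
    have hgu : g u = L (ψ' - ψ) := by
      simp only [hgdef, heq, heq', map_sub]
      abel
    rw [hgu]
    refine (L.le_opNorm _).trans ?_
    refine mul_le_mul_of_nonneg_left ?_ L.opNorm_nonneg
    refine (ContinuousMap.norm_le _
      (setIntegral_nonneg measurableSet_Ioc fun s _ => norm_nonneg _)).2 fun θ => ?_
    rw [ContinuousMap.sub_apply, hψ θ, hψ' θ]
    have hii' : IntervalIntegrable x' volume (θ:ℝ) (u + θ) := by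
      rw [intervalIntegrable_iff, Set.uIoc_of_le (le_add_of_nonneg_left hu)]
      exact (sol_integrableOn hr hx'.1 hx'.2.2.1 hφ hu).mono_set
        (Set.Ioc_subset_Ioc θ.2.1 (by linarith [θ.2.2]))
    have hii : IntervalIntegrable x volume (θ:ℝ) (u + θ) := by
      rw [intervalIntegrable_iff, Set.uIoc_of_le (le_add_of_nonneg_left hu)]
      exact (sol_integrableOn hr hx.1 hx.2.2.1 hφ hu).mono_set
        (Set.Ioc_subset_Ioc θ.2.1 (by linarith [θ.2.2]))
    rw [← intervalIntegral.integral_sub hii' hii]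
    exact key_bound hg0 hu θ.2.1 θ.2.2 (hgint u hu)
  -- bound on [0, t]
  obtain ⟨C, hC⟩ := isCompact_Icc.exists_bound_of_continuousOn
    (s := Set.Icc (0:ℝ) t) (hgcont.mono (fun s hs => hs.1))
  have hC0 : 0 ≤ C := (norm_nonneg (g 0)).trans (hC 0 ⟨le_rfl, ht⟩)
  -- iterated Gronwall bound
  have hind : ∀ m : ℕ, ∀ u ∈ Set.Icc (0:ℝ) t,
      ‖g u‖ ≤ C * ‖L‖ ^ m * u ^ m / (m.factorial : ℝ) := by
    intro m
    induction m with
    | zero => intro u hu; simpa using hC u hu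
    | succ m ih =>
      intro u hu
      refine (key u hu.1).trans ?_
      have hmono : ∫ s in Set.Ioc (0:ℝ) u, ‖g s‖
          ≤ ∫ s in Set.Ioc (0:ℝ) u, C * ‖L‖ ^ m * s ^ m / (m.factorial : ℝ) := by
        refine setIntegral_mono_on ((hgint u hu.1).norm) ?_ measurableSet_Ioc
          fun s hs => ih s ⟨hs.1.le, hs.2.trans hu.2⟩
        exact (Continuous.integrableOn_Ioc (by continuity))
      have hcomp : ∫ s in Set.Ioc (0:ℝ) u, C * ‖L‖ ^ m * s ^ m / (m.factorial : ℝ)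
          = (C * ‖L‖ ^ m / (m.factorial : ℝ)) * (u ^ (m+1) / (m+1)) := by
        rw [← intervalIntegral.integral_of_le hu.1]
        have : ∀ s : ℝ, C * ‖L‖ ^ m * s ^ m / (m.factorial : ℝ)
            = (C * ‖L‖ ^ m / (m.factorial : ℝ)) * s ^ m := fun s => by ring
        simp_rw [this]
        rw [intervalIntegral.integral_const_mul, integral_pow]
        norm_num
      have hLnn : 0 ≤ ‖L‖ := L.opNorm_nonneg
      calc ‖L‖ * ∫ s in Set.Ioc (0:ℝ) u, ‖g s‖
          ≤ ‖L‖ * ((C * ‖L‖ ^ m / (m.factorial : ℝ)) * (u ^ (m+1) / (m+1))) := by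
            rw [← hcomp]
            exact mul_le_mul_of_nonneg_left hmono hLnn
        _ = C * ‖L‖ ^ (m+1) * u ^ (m+1) / ((m.factorial : ℝ) * (m+1)) := by
            field_simp
            ring
        _ = C * ‖L‖ ^ (m+1) * u ^ (m+1) / ((m+1).factorial : ℝ) := by
            rw [Nat.factorial_succ]
            push_cast
            ring_nf
  -- pass to the limit
  have hlim : Filter.Tendsto (fun m : ℕ => C * ((‖L‖ * t) ^ m / (m.factorial : ℝ)))
      Filter.atTop (nhds 0) := by
    have := (FloorSemiring.tendsto_pow_div_factorial_atTop (‖L‖ * t)).const_mul C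
    simpa using this
  have hle : ‖g t‖ ≤ 0 := by
    refine ge_of_tendsto' hlim fun m => ?_
    have := hind m t ⟨ht, le_rfl⟩
    calc ‖g t‖ ≤ C * ‖L‖ ^ m * t ^ m / (m.factorial : ℝ) := this
      _ = C * ((‖L‖ * t) ^ m / (m.factorial : ℝ)) := by rw [mul_pow]; ring
  have : g t = 0 := norm_le_zero_iff.1 hle
  exact sub_eq_zero.1 this

theorem Sol.exists (r : ℝ) (L : C(Set.Icc (-r) (0:ℝ), E) →L[ℝ] E) (φ : ℝ → E) (ξ : E)
    (hr : 0 < r) (hφ : IntegrableOn φ (Set.Ico (-r) (0:ℝ)) volume) :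
    ∃ x : ℝ → E, Sol r L φ ξ x := by
  set k : ℝ := ‖L‖ + 1 with hkdef
  have hk : 0 < k := by positivity
  set K : NNReal := ‖L‖₊ / (‖L‖₊ + 1) with hKdef
  have hK1 : K < 1 := by
    rw [hKdef]
    rw [div_lt_one (lt_of_lt_of_le zero_lt_one (le_add_self))]
    exact lt_add_of_pos_right _ one_pos
  have hlip : LipschitzWith K (Phi L ξ hr hk hφ) := by
    refine LipschitzWith.of_dist_le_mul fun z z' => ?_
    have hcoe : (K : ℝ) = ‖L‖ / k := by
      rw [hKdef, hkdef]
      push_cast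
      simp [coe_nnnorm]
    rw [hcoe]
    exact dist_Phi_le L ξ hr hk hφ z z'
  have hcontr : ContractingWith K (Phi L ξ hr hk hφ) := ⟨hK1, hlip⟩
  haveI : Nonempty (BoundedContinuousFunction ℝ E) := ⟨0⟩
  set z := hcontr.fixedPoint (Phi L ξ hr hk hφ) with hz
  have hfix : Phi L ξ hr hk hφ z = z := hcontr.fixedPoint_isFixedPt
  have hfixt : ∀ t : ℝ,
      Real.exp (-(k * max t 0)) • (ξ + L (Psiz r k φ z hφ (max t 0))) = z t := by
    intro t
    conv_rhs => rw [← hfix]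
    rfl
  refine ⟨xz r k φ z, ?_, ?_, ?_, ?_⟩
  · intro θ hθ
    simp only [xz, if_neg (not_le.2 hθ.2)]
    exact Set.indicator_of_mem hθ φ
  · have h0 : xz r k φ z 0 = z 0 := by
      simp only [xz, if_pos le_rfl, mul_zero, Real.exp_zero, one_smul]
    rw [h0, ← hfixt 0]
    simp [Psiz_zero, Real.exp_zero]
  · refine ContinuousOn.congr ((continuous_cz k z).continuousOn) ?_
    intro s hs
    have h0 : (0:ℝ) ≤ s := hs
    simp only [xz, if_pos h0, max_eq_left h0]
  · intro t ht
    refine ⟨Psiz r k φ z hφ t, fun θ => Psiz_apply k z hφ t θ, ?_⟩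
    have hmax : max t 0 = t := max_eq_left ht
    have hz' := hfixt t
    rw [hmax] at hz'
    have hxt : xz r k φ z t = Real.exp (k * t) • z t := if_pos ht
    rw [hxt, ← hz', smul_smul, ← Real.exp_add]
    have : k * t + -(k * t) = 0 := by ring
    rw [this, Real.exp_zero, one_smul]

end Stmt0Aux


open Stmt0Aux in
/-- Existence and uniqueness of the mild solution of `ẋ(t) = L x_t` for an
`M¹` initial datum `(φ, ξ)`. -/
theorem stmt_0 {𝕜 : Type*} [RCLike 𝕜] {n : ℕ} (hn : 0 < n) {r : ℝ} (hr : 0 < r)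
    (L : C(Set.Icc (-r) (0:ℝ), Fin n → 𝕜) →L[𝕜] (Fin n → 𝕜))
    (φ : ℝ → Fin n → 𝕜) (ξ : Fin n → 𝕜)
    (hφ : IntegrableOn φ (Set.Ico (-r) (0:ℝ))) :
    ∃ x : ℝ → Fin n → 𝕜, IsSolForced r L φ ξ (fun _ => 0) x ∧
      ∀ x' : ℝ → Fin n → 𝕜, IsSolForced r L φ ξ (fun _ => 0) x' →
        ∀ t, 0 ≤ t → x' t = x t := by
  set L' : C(Set.Icc (-r) (0:ℝ), Fin n → 𝕜) →L[ℝ] (Fin n → 𝕜) :=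
    L.restrictScalars ℝ with hL'
  have hφ' : IntegrableOn φ (Set.Ico (-r) (0:ℝ)) volume := hφ
  have hiff : ∀ x : ℝ → Fin n → 𝕜,
      IsSolForced r L φ ξ (fun _ => 0) x ↔ Stmt0Aux.Sol r L' φ ξ x := by
    intro x
    constructor
    · rintro ⟨h1, h2, h3, h4⟩
      refine ⟨h1, h2, h3, fun t ht => ?_⟩
      obtain ⟨ψ, hψ1, hψ2⟩ := h4 t ht
      refine ⟨ψ, hψ1, ?_⟩
      rw [hψ2]
      simp [hL']
    · rintro ⟨h1, h2, h3, h4⟩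
      refine ⟨h1, h2, h3, fun t ht => ?_⟩
      obtain ⟨ψ, hψ1, hψ2⟩ := h4 t ht
      refine ⟨ψ, hψ1, ?_⟩
      rw [hψ2]
      simp [hL']
  obtain ⟨x, hx⟩ := Stmt0Aux.Sol.exists r L' φ ξ hr hφ'
  refine ⟨x, (hiff x).2 hx, fun x' hx' t ht =>
    Stmt0Aux.Sol.unique hr hφ' hx ((hiff x').1 hx') ht⟩
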